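/- arXiv:2507.02422 — 2 statements merged into one kernel-verified Lean document; each statement's English description precedes it below -/
import Mathlib

section
/- Let n, m ≥ 1, let H be a Hermitian complex matrix indexed by Fin n × Fin m all of whose eigenvalues lie in an interval I ⊆ ℝ, let f : ℝ → ℝ be convex on I, and let ρ be an n×n density matrix (positive semidefinite with Tr ρ = 1) with positive semidefinite square root √ρ. Then the matrix K := Tr₁((√ρ ⊗ 1) H (√ρ ⊗ 1)) is Hermitian with all eigenvalues in I, and Tr f(K) ≤ Tr(√ρ · (Tr₂ f(H)) · √ρ). -/
open Matrix
open scoped ComplexOrder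

/-- The partial trace over the first factor: `(Tr₁ X)_{j,l} = ∑ᵢ X_{(i,j),(i,l)}`. -/
noncomputable def ptrace1 {n m : ℕ} (X : Matrix (Fin n × Fin m) (Fin n × Fin m) ℂ) :
    Matrix (Fin m) (Fin m) ℂ :=
  Matrix.of fun j l => ∑ i : Fin n, X (i, j) (i, l)

/-- The partial trace over the second factor: `(Tr₂ X)_{i,k} = ∑ⱼ X_{(i,j),(k,j)}`. -/
noncomputable def ptrace2 {n m : ℕ} (X : Matrix (Fin n × Fin m) (Fin n × Fin m) ℂ) :
    Matrix (Fin n) (Fin n) ℂ :=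
  Matrix.of fun i k => ∑ j : Fin m, X (i, j) (k, j)

/-- `a ⊗ 1`, with entries `(a ⊗ 1)_{(i,j),(k,l)} = a_{i,k} δ_{j,l}`. -/
noncomputable def tensorOne {n m : ℕ} (a : Matrix (Fin n) (Fin n) ℂ) :
    Matrix (Fin n × Fin m) (Fin n × Fin m) ℂ :=
  Matrix.of fun p q => a p.1 q.1 * (if p.2 = q.2 then 1 else 0)

/-- `g` applied to a Hermitian matrix via the functional calculus
(`g(A) = ∑ᵢ g(λᵢ) Pᵢ` for the spectral decomposition `A = ∑ᵢ λᵢ Pᵢ`). -/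
noncomputable def matFun {k : Type*} [Fintype k] [DecidableEq k]
    {A : Matrix k k ℂ} (hA : A.IsHermitian) (g : ℝ → ℝ) : Matrix k k ℂ := hA.cfc g

/-! For `Φ X = Tr₁((s ⊗ 1) X (s ⊗ 1))` with `s = √ρ`, the map `Φ` is linear, positive, unital
because `Tr ρ = 1`, and `Tr Φ(X) = Tr(s (Tr₂ X) s)`. If `u` is a unit eigenvector of `Φ(H)` with
eigenvalue `μ`, then `X ↦ ⟪u, Φ(X) u⟫` is a state; on the spectral projections `P_α` of
`H = ∑ λ_α P_α` it gives convex weights `w_α` with `μ = ∑ w_α λ_α`. Hence `μ ∈ I` and, by the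
scalar Jensen inequality, `f μ ≤ ∑ w_α f(λ_α) = ⟪u, Φ(f(H)) u⟫`. Summing over an orthonormal
eigenbasis of `Φ(H)` gives `Tr f(Φ(H)) ≤ Tr Φ(f(H))`. -/

open Unitary

section StateJensen

variable {ι : Type*} [Fintype ι] [DecidableEq ι]

lemma Matrix.PosSemidef.conjStarAlgAut {X : Matrix ι ι ℂ} (hX : X.PosSemidef)
    (U : unitary (Matrix ι ι ℂ)) : (conjStarAlgAut ℂ _ U X).PosSemidef := by
  have := hX.conjTranspose_mul_mul_same (star (U : Matrix ι ι ℂ))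
  rwa [star_eq_conjTranspose, conjTranspose_conjTranspose, ← star_eq_conjTranspose] at this

lemma Matrix.trace_conjStarAlgAut (U : unitary (Matrix ι ι ℂ)) (X : Matrix ι ι ℂ) :
    (conjStarAlgAut ℂ _ U X).trace = X.trace := by
  rw [conjStarAlgAut_apply, trace_mul_cycle, coe_star_mul_self, one_mul]

namespace Matrix.IsHermitian

variable {H : Matrix ι ι ℂ}

lemma cfc_id (hH : H.IsHermitian) : hH.cfc id = H :=
  hH.spectral_theorem.symm

lemma cfc_eq_sum_smul (hH : H.IsHermitian) (g : ℝ → ℝ) :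
    hH.cfc g = ∑ i, (g (hH.eigenvalues i) : ℂ) •
      conjStarAlgAut ℂ _ hH.eigenvectorUnitary (single i i 1) := by
  simp_rw [← map_smul, ← map_sum, smul_single, smul_eq_mul, mul_one, sum_single_eq_diagonal]
  rfl

lemma trace_cfc (hH : H.IsHermitian) (g : ℝ → ℝ) :
    (hH.cfc g).trace = ∑ i, (g (hH.eigenvalues i) : ℂ) := by
  rw [IsHermitian.cfc, trace_conjStarAlgAut, trace_diagonal]
  rfl

lemma exists_weights_of_state (hH : H.IsHermitian) (ω : Matrix ι ι ℂ →ₗ[ℂ] ℂ)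
    (hω : ∀ X, X.PosSemidef → 0 ≤ ω X) (hω1 : ω 1 = 1) :
    ∃ w : ι → ℝ, (∀ i, 0 ≤ w i) ∧ ∑ i, w i = 1 ∧
      ∀ g : ℝ → ℝ, ω (hH.cfc g) = ((∑ i, w i • g (hH.eigenvalues i) : ℝ) : ℂ) := by
  set P : ι → Matrix ι ι ℂ := fun i => conjStarAlgAut ℂ _ hH.eigenvectorUnitary (single i i 1)
  have hP : ∀ i, 0 ≤ ω (P i) := fun i => hω _ <| by
    refine PosSemidef.conjStarAlgAut ?_ _
    rw [← diagonal_single]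
    exact PosSemidef.diagonal (Pi.single_nonneg.2 zero_le_one)
  have hωP : ∀ i, ω (P i) = (ω (P i)).re := fun i =>
    Complex.ext rfl (Complex.nonneg_iff.1 (hP i)).2.symm
  refine ⟨fun i => (ω (P i)).re, fun i => (Complex.nonneg_iff.1 (hP i)).1, ?_, fun g => ?_⟩
  · have hsum : ∑ i, ω (P i) = 1 := by
      rw [← map_sum, ← hω1, ← map_sum, sum_single_one, map_one]
    simpa using congrArg Complex.re hsum
  · rw [cfc_eq_sum_smul, map_sum, Complex.ofReal_sum]
    refine Finset.sum_congr rfl fun i _ => ?_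
    rw [map_smul, smul_eq_mul, smul_eq_mul, Complex.ofReal_mul, mul_comm, ← hωP i]

end Matrix.IsHermitian

variable {I : Set ℝ} {f : ℝ → ℝ} {H : Matrix ι ι ℂ}

theorem ConvexOn.exists_state_eq_and_map_le (hf : ConvexOn ℝ I f) (ω : Matrix ι ι ℂ →ₗ[ℂ] ℂ)
    (hω : ∀ X, X.PosSemidef → 0 ≤ ω X) (hω1 : ω 1 = 1) (hH : H.IsHermitian)
    (hspec : ∀ i, hH.eigenvalues i ∈ I) :
    ∃ x ∈ I, ω H = x ∧ (f x : ℂ) ≤ ω (hH.cfc f) := by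
  obtain ⟨w, hw0, hw1, hωcfc⟩ := hH.exists_weights_of_state ω hω hω1
  refine ⟨∑ i, w i • hH.eigenvalues i, hf.1.sum_mem (fun i _ => hw0 i) hw1 (fun i _ => hspec i),
    by simpa [IsHermitian.cfc_id] using hωcfc id, ?_⟩
  rw [hωcfc, Complex.real_le_real]
  exact hf.map_sum_le (fun i _ => hw0 i) hw1 (fun i _ => hspec i)

variable {κ : Type*} [Fintype κ] [DecidableEq κ]

theorem ConvexOn.eigenvalues_mem_and_trace_cfc_le (hf : ConvexOn ℝ I f)
    (Φ : Matrix ι ι ℂ →ₗ[ℂ] Matrix κ κ ℂ) (hΦ : ∀ X, X.PosSemidef → (Φ X).PosSemidef)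
    (hΦ1 : Φ 1 = 1) (hH : H.IsHermitian) (hspec : ∀ i, hH.eigenvalues i ∈ I)
    (hΦH : (Φ H).IsHermitian) :
    (∀ j, hΦH.eigenvalues j ∈ I) ∧ (hΦH.cfc f).trace ≤ (Φ (hH.cfc f)).trace := by
  set C := (conjStarAlgAut ℂ _ (star hΦH.eigenvectorUnitary)).toAlgEquiv.toLinearMap ∘ₗ Φ
  have hCH : C H = diagonal (RCLike.ofReal ∘ hΦH.eigenvalues) :=
    hΦH.conjStarAlgAut_star_eigenvectorUnitary
  -- `ω j X = ⟪u_j, Φ X u_j⟫` for the `j`-th eigenvector `u_j` of `Φ H`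
  let ω : κ → Matrix ι ι ℂ →ₗ[ℂ] ℂ := fun j => entryLinearMap ℂ ℂ j j ∘ₗ C
  have hω : ∀ j X, X.PosSemidef → 0 ≤ ω j X := fun j X hX =>
    ((hΦ X hX).conjStarAlgAut _).diag_nonneg
  have hω1 : ∀ j, ω j 1 = 1 := fun j => by simp [ω, C, hΦ1]
  choose x hxI hωH hle using fun j => hf.exists_state_eq_and_map_le (ω j) (hω j) (hω1 j) hH hspec
  have hx : ∀ j, hΦH.eigenvalues j = x j := fun j => by
    simpa [ω, hCH] using hωH j
  refine ⟨fun j => hx j ▸ hxI j, ?_⟩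
  calc (hΦH.cfc f).trace = ∑ j, (f (x j) : ℂ) := by simp_rw [IsHermitian.trace_cfc, hx]
    _ ≤ ∑ j, ω j (hH.cfc f) := Finset.sum_le_sum fun j _ => hle j
    _ = (Φ (hH.cfc f)).trace := trace_conjStarAlgAut _ _

end StateJensen

section PartialTrace

variable {n m : ℕ}

lemma ptrace1_eq_sum_submatrix (X : Matrix (Fin n × Fin m) (Fin n × Fin m) ℂ) :
    ptrace1 X = ∑ i, X.submatrix (Prod.mk i) (Prod.mk i) := by
  ext j l
  simp [ptrace1, Matrix.sum_apply]

lemma posSemidef_ptrace1 {X : Matrix (Fin n × Fin m) (Fin n × Fin m) ℂ} (hX : X.PosSemidef) :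
    (ptrace1 X).PosSemidef := by
  rw [ptrace1_eq_sum_submatrix]
  exact posSemidef_sum _ fun i _ => hX.submatrix _

lemma isHermitian_ptrace1 {X : Matrix (Fin n × Fin m) (Fin n × Fin m) ℂ} (hX : X.IsHermitian) :
    (ptrace1 X).IsHermitian := by
  rw [ptrace1_eq_sum_submatrix]
  exact isSelfAdjoint_sum _ fun i _ => hX.submatrix _

lemma trace_ptrace1 (X : Matrix (Fin n × Fin m) (Fin n × Fin m) ℂ) :
    (ptrace1 X).trace = X.trace := by
  simp only [ptrace1, trace, diag, of_apply, Fintype.sum_prod_type]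
  exact Finset.sum_comm

lemma ptrace1_tensorOne (a : Matrix (Fin n) (Fin n) ℂ) :
    ptrace1 (tensorOne a (m := m)) = a.trace • (1 : Matrix (Fin m) (Fin m) ℂ) := by
  ext j l
  by_cases h : j = l <;> simp [ptrace1, tensorOne, trace, one_apply, h]

lemma isHermitian_tensorOne {a : Matrix (Fin n) (Fin n) ℂ} (ha : a.IsHermitian) :
    (tensorOne a (m := m)).IsHermitian := by
  ext p q
  by_cases h : p.2 = q.2 <;> simp [tensorOne, h, eq_comm, ← ha.apply p.1 q.1]

lemma tensorOne_mul_tensorOne (a b : Matrix (Fin n) (Fin n) ℂ) :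
    tensorOne a * tensorOne b = tensorOne (a * b) (m := m) := by
  ext p q
  simp only [mul_apply, tensorOne, of_apply, Fintype.sum_prod_type]
  rw [Finset.sum_comm]
  by_cases h : p.2 = q.2 <;> simp [h]

lemma trace_mul_tensorOne (X : Matrix (Fin n × Fin m) (Fin n × Fin m) ℂ)
    (a : Matrix (Fin n) (Fin n) ℂ) :
    (X * tensorOne a).trace = (ptrace2 X * a).trace := by
  simp only [trace, diag, mul_apply, ptrace2, tensorOne, of_apply, Fintype.sum_prod_type,
    mul_ite, mul_one, mul_zero, Finset.sum_ite_eq', Finset.mem_univ, if_true, Finset.sum_mul]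
  exact Finset.sum_congr rfl fun i _ => Finset.sum_comm

end PartialTrace

section Compression

variable {n m : ℕ} (s : Matrix (Fin n) (Fin n) ℂ)

noncomputable def ptrace1Compress :
    Matrix (Fin n × Fin m) (Fin n × Fin m) ℂ →ₗ[ℂ] Matrix (Fin m) (Fin m) ℂ where
  toFun X := ptrace1 (tensorOne s * X * tensorOne s)
  map_add' X Y := by
    ext j l
    simp [ptrace1, mul_add, add_mul, Finset.sum_add_distrib]
  map_smul' c X := by
    ext j l
    simp [ptrace1, Finset.mul_sum]

lemma ptrace1Compress_apply (X : Matrix (Fin n × Fin m) (Fin n × Fin m) ℂ) :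
    ptrace1Compress s X = ptrace1 (tensorOne s * X * tensorOne s) :=
  rfl

lemma ptrace1Compress_one :
    ptrace1Compress s (1 : Matrix (Fin n × Fin m) (Fin n × Fin m) ℂ) = (s * s).trace • 1 := by
  rw [ptrace1Compress_apply, mul_one, tensorOne_mul_tensorOne, ptrace1_tensorOne]

lemma trace_ptrace1Compress (X : Matrix (Fin n × Fin m) (Fin n × Fin m) ℂ) :
    (ptrace1Compress s X).trace = (s * ptrace2 X * s).trace := by
  rw [ptrace1Compress_apply, trace_ptrace1, trace_mul_comm, ← mul_assoc, trace_mul_comm,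
    tensorOne_mul_tensorOne, trace_mul_tensorOne, trace_mul_cycle, trace_mul_comm]

variable {s}

lemma isHermitian_ptrace1Compress (hs : s.IsHermitian)
    {X : Matrix (Fin n × Fin m) (Fin n × Fin m) ℂ} (hX : X.IsHermitian) :
    (ptrace1Compress s X).IsHermitian := by
  rw [ptrace1Compress_apply]
  nth_rewrite 1 [← (isHermitian_tensorOne hs).eq]
  exact isHermitian_ptrace1 (isHermitian_conjTranspose_mul_mul _ hX)

lemma posSemidef_ptrace1Compress (hs : s.IsHermitian)
    {X : Matrix (Fin n × Fin m) (Fin n × Fin m) ℂ} (hX : X.PosSemidef) :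
    (ptrace1Compress s X).PosSemidef := by
  rw [ptrace1Compress_apply]
  nth_rewrite 1 [← (isHermitian_tensorOne hs).eq]
  exact posSemidef_ptrace1 (hX.conjTranspose_mul_mul_same _)

end Compression

theorem trace_jensen_partial_trace_density_matrix_general {n m : ℕ}
    {H : Matrix (Fin n × Fin m) (Fin n × Fin m) ℂ} (hH : H.IsHermitian)
    (I : Set ℝ) (hspec : ∀ i, hH.eigenvalues i ∈ I)
    (f : ℝ → ℝ) (hconv : ConvexOn ℝ I f)
    {ρ : Matrix (Fin n) (Fin n) ℂ} (hρtr : ρ.trace = 1)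
    {s : Matrix (Fin n) (Fin n) ℂ} (hs : s.PosSemidef) (hssq : s * s = ρ) :
    ∃ hK : (ptrace1 (tensorOne s * H * tensorOne s)).IsHermitian,
      (∀ j, hK.eigenvalues j ∈ I) ∧
        (matFun hK f).trace ≤ (s * ptrace2 (matFun hH f) * s).trace := by
  have hK := isHermitian_ptrace1Compress hs.isHermitian hH
  have hunital : ptrace1Compress s 1 = (1 : Matrix (Fin m) (Fin m) ℂ) := by
    rw [ptrace1Compress_one, hssq, hρtr, one_smul]
  obtain ⟨hmem, hle⟩ := hconv.eigenvalues_mem_and_trace_cfc_le (ptrace1Compress s)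
    (fun _ => posSemidef_ptrace1Compress hs.isHermitian) hunital hH hspec hK
  exact ⟨hK, hmem, by rwa [trace_ptrace1Compress] at hle⟩

/-- **Jensen's inequality for partial traces (Carlen–Frank–Larson).**
For `n, m ≥ 1`, a Hermitian `H` on `ℂⁿ ⊗ ℂᵐ` all of whose eigenvalues lie in an interval
`I ⊆ ℝ`, a function `f : ℝ → ℝ` convex on `I`, and a density matrix `ρ` (positive semidefinite
of trace `1`) with positive semidefinite square root `s` (`s * s = ρ`), the matrix
`K = Tr₁((√ρ ⊗ 1) H (√ρ ⊗ 1))` is Hermitian with all eigenvalues in `I`, and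
`Tr f(K) ≤ Tr(√ρ · (Tr₂ f(H)) · √ρ)`. -/
theorem trace_jensen_partial_trace_density_matrix {n m : ℕ} (hn : 1 ≤ n) (hm : 1 ≤ m)
    {H : Matrix (Fin n × Fin m) (Fin n × Fin m) ℂ} (hH : H.IsHermitian)
    (I : Set ℝ) (hspec : ∀ i, hH.eigenvalues i ∈ I)
    (f : ℝ → ℝ) (hconv : ConvexOn ℝ I f)
    {ρ : Matrix (Fin n) (Fin n) ℂ} (hρ : ρ.PosSemidef) (hρtr : ρ.trace = 1)
    {s : Matrix (Fin n) (Fin n) ℂ} (hs : s.PosSemidef) (hssq : s * s = ρ) :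
    ∃ hK : (ptrace1 (tensorOne s * H * tensorOne s)).IsHermitian,
      (∀ j, hK.eigenvalues j ∈ I) ∧
        (matFun hK f).trace ≤ (s * ptrace2 (matFun hH f) * s).trace :=
  trace_jensen_partial_trace_density_matrix_general hH I hspec f hconv hρtr hs hssq
end

section
/- Let H be a complex Hilbert space, let Φ : B(H) → B(H) be a positive unital linear map, let x ∈ B(H) be selfadjoint, let f : ℝ → ℝ be continuous and convex, and let ξ ∈ H be a unit vector. Then f(Re⟨Φ(x)ξ, ξ⟩) ≤ Re⟨Φ(f(x))ξ, ξ⟩, where f(x) denotes the continuous functional calculus of f applied to x. -/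
/-!
At `t = ω x`, where `ω y = re ⟪Φ y ξ, ξ⟫` is a positive unital functional, the convex function `f`
lies above its supporting line `ℓ s = f t + c (s - t)`, with `c` the right derivative of `f`
at `t`. Functional calculus is monotone, so `ℓ(x) ≤ f(x)`, and `ω` is affine on `ℓ(x)`, whence
`f (ω x) = ω (ℓ(x)) ≤ ω (f(x))`.
-/

open Set

lemma ConvexOn.add_rightDeriv_mul_sub_le {S : Set ℝ} {f : ℝ → ℝ} (hf : ConvexOn ℝ S f)
    {t s : ℝ} (ht : t ∈ interior S) (hs : s ∈ S) :
    f t + derivWithin f (Ioi t) t * (s - t) ≤ f s := by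
  rcases lt_trichotomy s t with hst | rfl | hts
  · have := (hf.slope_le_leftDeriv_of_mem_interior hs ht hst).trans
      (hf.leftDeriv_le_rightDeriv_of_mem_interior ht)
    rw [slope_def_field, div_le_iff₀ (sub_pos.2 hst)] at this
    linarith
  · simp
  · have := hf.rightDeriv_le_slope_of_mem_interior ht hs hts
    rw [slope_def_field, le_div_iff₀ (sub_pos.2 hts)] at this
    linarith

section Jensen

variable {A : Type*} [Ring A] [StarRing A] [PartialOrder A] [StarOrderedRing A] [Algebra ℝ A]
  [TopologicalSpace A] [ContinuousFunctionalCalculus ℝ A IsSelfAdjoint]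

lemma ConvexOn.map_apply_le_apply_cfc {f : ℝ → ℝ} (hf : ConvexOn ℝ univ f) (ω : A →ₚ[ℝ] ℝ)
    (hω : ω 1 = 1) {a : A} (ha : IsSelfAdjoint a) : f (ω a) ≤ ω (cfc f a) := by
  set t := ω a
  set c := derivWithin f (Ioi t) t
  have hsupport : ∀ s, f t + c * (s - t) ≤ f s := fun s =>
    hf.add_rightDeriv_mul_sub_le (by simp) (mem_univ s)
  have hfc : Continuous f := continuousOn_univ.1 (hf.continuousOn isOpen_univ)
  have hline : cfc (fun s => c * s + (f t - c * t)) a = c • a + algebraMap ℝ A (f t - c * t) := by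
    rw [cfc_add .., cfc_const_mul_id c a, cfc_const _ a]
  calc f t = ω (cfc (fun s => c * s + (f t - c * t)) a) := by
        rw [hline, map_add, ω.map_smul_of_tower, Algebra.algebraMap_eq_smul_one,
          ω.map_smul_of_tower, hω, smul_eq_mul, smul_eq_mul]
        ring
    _ ≤ ω (cfc f a) := ω.monotone' (cfc_mono fun s _ => by linarith [hsupport s])

end Jensen

section ReInnerFunctional

variable {H : Type*} [NormedAddCommGroup H] [InnerProductSpace ℂ H]

noncomputable def ContinuousLinearMap.reInnerFunctional (ξ : H) : (H →L[ℂ] H) →ₚ[ℝ] ℝ where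
  toFun T := (inner ℂ (T ξ) ξ).re
  map_add' S T := by simp
  map_smul' r T := by simp
  monotone' S T hST := by
    simpa [inner_sub_left] using ((ContinuousLinearMap.le_def S T).1 hST).re_inner_nonneg_left ξ

lemma ContinuousLinearMap.reInnerFunctional_apply (ξ : H) (T : H →L[ℂ] H) :
    reInnerFunctional ξ T = (inner ℂ (T ξ) ξ).re :=
  rfl

end ReInnerFunctional

theorem jensen_vector_state_unital_positive_map_general
    {H : Type*} [NormedAddCommGroup H] [InnerProductSpace ℂ H] [CompleteSpace H]
    (Φ : (H →L[ℂ] H) →ₗ[ℂ] (H →L[ℂ] H))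
    (hΦpos : ∀ y : H →L[ℂ] H, y.IsPositive → (Φ y).IsPositive)
    (hΦ1 : Φ 1 = 1)
    {x : H →L[ℂ] H} (hx : IsSelfAdjoint x)
    (f : ℝ → ℝ) (hconv : ConvexOn ℝ Set.univ f)
    (ξ : H) (hξ : ‖ξ‖ = 1) :
    f (Complex.re (inner ℂ ((Φ x) ξ) ξ)) ≤ Complex.re (inner ℂ ((Φ (cfc f x)) ξ) ξ) := by
  have hΦ : ∀ y, 0 ≤ y → 0 ≤ Φ y := fun y hy =>
    (ContinuousLinearMap.nonneg_iff_isPositive _).2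
      (hΦpos y ((ContinuousLinearMap.nonneg_iff_isPositive y).1 hy))
  let ω := (ContinuousLinearMap.reInnerFunctional ξ).comp (.mk₀ (Φ.restrictScalars ℝ) hΦ)
  have hω : ω 1 = 1 := by
    simp [ω, PositiveLinearMap.mk₀, hΦ1, ContinuousLinearMap.reInnerFunctional_apply, hξ]
  exact hconv.map_apply_le_apply_cfc ω hω hx

/-- **Vector-state Jensen inequality for positive unital maps on `B(H)`.**
If `Φ : B(H) → B(H)` is a positive unital linear map, `x` is selfadjoint, `f : ℝ → ℝ` is
continuous and convex, and `ξ` is a unit vector, then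
`f(Re⟨Φ(x)ξ, ξ⟩) ≤ Re⟨Φ(f(x))ξ, ξ⟩`, where `f(x)` is given by the continuous functional
calculus. -/
theorem jensen_vector_state_unital_positive_map
    {H : Type*} [NormedAddCommGroup H] [InnerProductSpace ℂ H] [CompleteSpace H]
    (Φ : (H →L[ℂ] H) →ₗ[ℂ] (H →L[ℂ] H))
    (hΦpos : ∀ y : H →L[ℂ] H, y.IsPositive → (Φ y).IsPositive)
    (hΦ1 : Φ 1 = 1)
    {x : H →L[ℂ] H} (hx : IsSelfAdjoint x)
    (f : ℝ → ℝ) (hf : Continuous f) (hconv : ConvexOn ℝ Set.univ f)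
    (ξ : H) (hξ : ‖ξ‖ = 1) :
    f (Complex.re (inner ℂ ((Φ x) ξ) ξ)) ≤ Complex.re (inner ℂ ((Φ (cfc f x)) ξ) ξ) :=
  jensen_vector_state_unital_positive_map_general Φ hΦpos hΦ1 hx f hconv ξ hξ
end
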